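/- The map ℝ^r → (𝔾_m^r)^an sending ω to the weighted Gauss norm η_s associated to s = (e^{-ω_1}, …, e^{-ω_r}) is a continuous section of the tropicalization map trop, and it is a homeomorphism of ℝ^r onto its image (the skeleton S((𝔾_m^r)^an)), which is a closed subset of (𝔾_m^r)^an. -/

import Mathlib

/-! Over a nonarchimedean field the weighted Gauss norm on `K[ℤ^r]` is multiplicative because
`ℤ^r` has unique sums: among the monomials of `f` and `g` attaining their Gauss norms there is a
pair `(a₀, b₀)` such that `a₀ + b₀` is not the sum of any other such pair, so in the coefficient
of `f * g` at `a₀ + b₀` the term `f a₀ * g b₀` strictly dominates all others. The Gauss points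
then form a continuous section of the continuous map `trop`, hence an embedding with closed image,
the image being a retract of a Hausdorff space. -/

open scoped NNReal

/-- The Berkovich analytification `(𝔾_m^r)^an` of the split torus over a complete
non-archimedean field `K`: multiplicative seminorms on `K[z_1^{±1},…,z_r^{±1}]`
(modelled as `AddMonoidAlgebra K (ℤ^r)`) extending the absolute value of `K`. -/
def TorusBerk (K : Type*) [NormedField K] (r : ℕ) : Type _ :=
  {p : AddMonoidAlgebra K (Fin r → ℤ) → ℝ //
    (∀ f g, p (f * g) = p f * p g) ∧
    (∀ f g, p (f + g) ≤ max (p f) (p g)) ∧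
    (∀ a : K, p (AddMonoidAlgebra.single 0 a) = ‖a‖) ∧
    (∀ f, 0 ≤ p f)}

noncomputable instance (K : Type*) [NormedField K] (r : ℕ) :
    TopologicalSpace (TorusBerk K r) := by
  unfold TorusBerk; infer_instance

/-- The tropicalization map `trop : (𝔾_m^r)^an → ℝ^r`. -/
noncomputable def tropMap {K : Type*} [NormedField K] {r : ℕ} (p : TorusBerk K r) :
    Fin r → ℝ :=
  fun i => - Real.log (p.1 (AddMonoidAlgebra.single (Pi.single i 1) 1))

/-- The weighted Gauss norm `η_s` associated to `ω ∈ ℝ^r`, with weights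
`s = (e^{-ω_1}, …, e^{-ω_r})`: `|∑ α_m z^m|_s = max_m |α_m| s^m`. -/
noncomputable def gaussFun {K : Type*} [NormedField K] {r : ℕ} (ω : Fin r → ℝ)
    (f : AddMonoidAlgebra K (Fin r → ℤ)) : ℝ :=
  ((f.coeff.support.sup fun m => ‖f.coeff m‖₊ * ∏ i, (Real.exp (-ω i)).toNNReal ^ (m i) : ℝ≥0) : ℝ)

open Finset

theorem IsUltrametricDist.nnnorm_sum_eq_of_forall_lt {M ι : Type*} [SeminormedAddCommGroup M]
    [IsUltrametricDist M] [DecidableEq ι] {s : Finset ι} {f : ι → M} {i : ι} (hi : i ∈ s)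
    (h : ∀ j ∈ s, j ≠ i → ‖f j‖₊ < ‖f i‖₊) : ‖∑ j ∈ s, f j‖₊ = ‖f i‖₊ := by
  rw [← add_sum_erase s f hi]
  rcases (s.erase i).eq_empty_or_nonempty with hempty | hne
  · rw [hempty, sum_empty, add_zero]
  have hrest : ‖∑ j ∈ s.erase i, f j‖₊ < ‖f i‖₊ := by
    rw [← NNReal.coe_lt_coe, coe_nnnorm]
    refine (hne.norm_sum_le_sup'_norm f).trans_lt ((sup'_lt_iff hne).2 fun j hj =>
      h j (mem_of_mem_erase hj) (ne_of_mem_erase hj))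
  rw [IsUltrametricDist.nnnorm_add_eq_max_of_nnnorm_ne_nnnorm hrest.ne', max_eq_left hrest.le]

namespace AddMonoidAlgebra

variable {R M : Type*} [NormedRing R] [AddCommGroup M]

noncomputable def gaussNorm (w : AddChar M ℝ≥0) (f : AddMonoidAlgebra R M) : ℝ≥0 :=
  f.coeff.support.sup fun m => ‖f.coeff m‖₊ * w m

variable (w : AddChar M ℝ≥0)

theorem le_gaussNorm (f : AddMonoidAlgebra R M) (m : M) :
    ‖f.coeff m‖₊ * w m ≤ gaussNorm w f := by
  by_cases hm : m ∈ f.coeff.support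
  · exact le_sup (f := fun m => ‖f.coeff m‖₊ * w m) hm
  · simp [Finsupp.notMem_support_iff.mp hm]

theorem exists_eq_gaussNorm {f : AddMonoidAlgebra R M} (hf : f ≠ 0) :
    ∃ m ∈ f.coeff.support, ‖f.coeff m‖₊ * w m = gaussNorm w f := by
  obtain ⟨m, hm, heq⟩ := Finset.exists_mem_eq_sup f.coeff.support
    (Finsupp.support_nonempty_iff.2 (mt AddMonoidAlgebra.coeff_eq_zero.1 hf))
    (fun m => ‖f.coeff m‖₊ * w m)
  exact ⟨m, hm, heq.symm⟩

@[simp]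
theorem gaussNorm_zero : gaussNorm w (0 : AddMonoidAlgebra R M) = 0 := by
  simp [gaussNorm]

@[simp]
theorem gaussNorm_single (m : M) (a : R) : gaussNorm w (single m a) = ‖a‖₊ * w m := by
  rcases eq_or_ne a 0 with rfl | ha
  · simp [gaussNorm]
  · rw [gaussNorm, coeff_single, Finsupp.support_single _ ha, sup_singleton,
      Finsupp.single_eq_same]

theorem gaussNorm_pos {f : AddMonoidAlgebra R M} (hf : f ≠ 0) : 0 < gaussNorm w f := by
  obtain ⟨m, hm, heq⟩ := exists_eq_gaussNorm w hf
  rw [← heq]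
  exact mul_pos (nnnorm_pos.2 (Finsupp.mem_support_iff.1 hm))
    (pos_iff_ne_zero.2 (w.val_isUnit m).ne_zero)

theorem continuous_gaussNorm {X : Type*} [TopologicalSpace X] {w : X → AddChar M ℝ≥0}
    (hw : ∀ m, Continuous fun x => w x m) (f : AddMonoidAlgebra R M) :
    Continuous fun x => gaussNorm (w x) f :=
  Continuous.finset_sup_apply fun m _ => continuous_const.mul (hw m)

theorem coeff_mul_eq_sum [DecidableEq M] (f g : AddMonoidAlgebra R M) (k : M) :
    (f * g).coeff k = ∑ p ∈ f.coeff.support ×ˢ g.coeff.support,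
      if p.1 + p.2 = k then f.coeff p.1 * g.coeff p.2 else 0 := by
  rw [coeff_mul, Finsupp.sum, sum_product]
  rfl

section Ultrametric

variable [IsUltrametricDist R]

theorem gaussNorm_add_le (f g : AddMonoidAlgebra R M) :
    gaussNorm w (f + g) ≤ max (gaussNorm w f) (gaussNorm w g) := by
  refine Finset.sup_le fun m _ => ?_
  rw [coeff_add, Finsupp.add_apply]
  calc ‖f.coeff m + g.coeff m‖₊ * w m ≤ max ‖f.coeff m‖₊ ‖g.coeff m‖₊ * w m := by
        gcongr; exact IsUltrametricDist.nnnorm_add_le_max _ _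
    _ = max (‖f.coeff m‖₊ * w m) (‖g.coeff m‖₊ * w m) := max_mul_of_nonneg _ _ zero_le
    _ ≤ _ := max_le_max (le_gaussNorm w f m) (le_gaussNorm w g m)

theorem gaussNorm_mul_le (f g : AddMonoidAlgebra R M) :
    gaussNorm w (f * g) ≤ gaussNorm w f * gaussNorm w g := by
  classical
  refine Finset.sup_le fun k _ => ?_
  rw [← le_div_iff₀ (pos_iff_ne_zero.2 (w.val_isUnit k).ne_zero), coeff_mul_eq_sum]
  refine IsUltrametricDist.nnnorm_sum_le_of_forall_le fun p _ => ?_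
  split_ifs with hp
  · rw [le_div_iff₀ (pos_iff_ne_zero.2 (w.val_isUnit k).ne_zero), ← hp, w.map_add_eq_mul]
    calc ‖f.coeff p.1 * g.coeff p.2‖₊ * (w p.1 * w p.2)
        ≤ ‖f.coeff p.1‖₊ * w p.1 * (‖g.coeff p.2‖₊ * w p.2) := by
          rw [mul_mul_mul_comm]; gcongr; exact nnnorm_mul_le _ _
      _ ≤ gaussNorm w f * gaussNorm w g := by gcongr <;> exact le_gaussNorm w _ _
  · simp

theorem nnnorm_coeff_mul_add_of_forall_lt [NormMulClass R] [DecidableEq M]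
    {f g : AddMonoidAlgebra R M} {a₀ b₀ : M}
    (ha₀ : a₀ ∈ f.coeff.support) (hb₀ : b₀ ∈ g.coeff.support)
    (h : ∀ a ∈ f.coeff.support, ∀ b ∈ g.coeff.support, a + b = a₀ + b₀ → (a, b) ≠ (a₀, b₀) →
      ‖f.coeff a‖₊ * ‖g.coeff b‖₊ < ‖f.coeff a₀‖₊ * ‖g.coeff b₀‖₊) :
    ‖(f * g).coeff (a₀ + b₀)‖₊ = ‖f.coeff a₀‖₊ * ‖g.coeff b₀‖₊ := by
  have hpos : 0 < ‖f.coeff a₀‖₊ * ‖g.coeff b₀‖₊ :=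
    mul_pos (nnnorm_pos.2 (Finsupp.mem_support_iff.1 ha₀))
      (nnnorm_pos.2 (Finsupp.mem_support_iff.1 hb₀))
  have hmem : (a₀, b₀) ∈ f.coeff.support ×ˢ g.coeff.support := mem_product.2 ⟨ha₀, hb₀⟩
  rw [coeff_mul_eq_sum, IsUltrametricDist.nnnorm_sum_eq_of_forall_lt hmem, if_pos rfl, nnnorm_mul]
  rintro ⟨a, b⟩ hab hne
  rw [mem_product] at hab
  dsimp only at hab ⊢
  rw [if_pos rfl, nnnorm_mul]
  split_ifs with hsum
  · rw [nnnorm_mul]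
    exact h a hab.1 b hab.2 hsum hne
  · rwa [nnnorm_zero]

theorem gaussNorm_mul [NormMulClass R] [UniqueSums M] (f g : AddMonoidAlgebra R M) :
    gaussNorm w (f * g) = gaussNorm w f * gaussNorm w g := by
  classical
  refine (gaussNorm_mul_le w f g).antisymm ?_
  rcases eq_or_ne f 0 with rfl | hf
  · simp
  rcases eq_or_ne g 0 with rfl | hg
  · simp
  set A := f.coeff.support.filter fun m => ‖f.coeff m‖₊ * w m = gaussNorm w f
  set B := g.coeff.support.filter fun m => ‖g.coeff m‖₊ * w m = gaussNorm w g
  have hA : A.Nonempty :=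
    let ⟨m, hm, heq⟩ := exists_eq_gaussNorm w hf; ⟨m, mem_filter.2 ⟨hm, heq⟩⟩
  have hB : B.Nonempty :=
    let ⟨m, hm, heq⟩ := exists_eq_gaussNorm w hg; ⟨m, mem_filter.2 ⟨hm, heq⟩⟩
  obtain ⟨a₀, ha₀, b₀, hb₀, huniq⟩ := UniqueSums.uniqueAdd_of_nonempty hA hB
  rw [mem_filter] at ha₀ hb₀
  have hcoeff := nnnorm_coeff_mul_add_of_forall_lt ha₀.1 hb₀.1 fun a ha b hb hab hne => by
    have hlt : ‖f.coeff a‖₊ * w a * (‖g.coeff b‖₊ * w b) < gaussNorm w f * gaussNorm w g := by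
      refine lt_of_le_of_ne (mul_le_mul' (le_gaussNorm w f a) (le_gaussNorm w g b)) fun heq => ?_
      have hfa_pos : 0 < ‖f.coeff a‖₊ * w a :=
        mul_pos (nnnorm_pos.2 (Finsupp.mem_support_iff.1 ha))
          (pos_iff_ne_zero.2 (w.val_isUnit a).ne_zero)
      obtain ⟨hfa, hgb⟩ := (mul_eq_mul_iff_eq_and_eq_of_pos (le_gaussNorm w f a)
        (le_gaussNorm w g b) hfa_pos (gaussNorm_pos w hg)).1 heq
      obtain ⟨rfl, rfl⟩ := huniq (mem_filter.2 ⟨ha, hfa⟩) (mem_filter.2 ⟨hb, hgb⟩) hab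
      exact hne rfl
    rw [← ha₀.2, ← hb₀.2, mul_mul_mul_comm, mul_mul_mul_comm _ (w a₀), ← w.map_add_eq_mul,
      ← w.map_add_eq_mul, hab] at hlt
    exact lt_of_mul_lt_mul_right hlt zero_le
  calc gaussNorm w f * gaussNorm w g
      = ‖f.coeff a₀‖₊ * ‖g.coeff b₀‖₊ * w (a₀ + b₀) := by
        rw [← ha₀.2, ← hb₀.2, w.map_add_eq_mul, mul_mul_mul_comm]
    _ = ‖(f * g).coeff (a₀ + b₀)‖₊ * w (a₀ + b₀) := by rw [hcoeff]
    _ ≤ gaussNorm w (f * g) := le_gaussNorm w _ _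

end Ultrametric

end AddMonoidAlgebra

open AddMonoidAlgebra

namespace TorusBerk

variable {K : Type*} [NormedField K] {r : ℕ}

instance : T2Space (TorusBerk K r) := by
  unfold TorusBerk; infer_instance

theorem continuous_eval (f : AddMonoidAlgebra K (Fin r → ℤ)) :
    Continuous fun p : TorusBerk K r => p.1 f :=
  (continuous_apply f).comp continuous_subtype_val

theorem apply_monomial_ne_zero (p : TorusBerk K r) (m : Fin r → ℤ) :
    p.1 (single m 1) ≠ 0 := by
  have hunit : p.1 (single m 1) * p.1 (single (-m) 1) = 1 := by
    rw [← p.2.1, single_mul_single, add_neg_cancel, one_mul, p.2.2.2.1, norm_one]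
  exact left_ne_zero_of_mul_eq_one hunit

theorem continuous_tropMap : Continuous (tropMap (K := K) (r := r)) :=
  continuous_pi fun _ => ((continuous_eval _).log fun p => apply_monomial_ne_zero p _).neg

noncomputable def torusWeight (ω : Fin r → ℝ) : AddChar (Fin r → ℤ) ℝ≥0 where
  toFun m := ∏ i, (Real.exp (-ω i)).toNNReal ^ (m i)
  map_zero_eq_one' := by simp
  map_add_eq_mul' m n := by
    simp only [Pi.add_apply, ← prod_mul_distrib]
    exact prod_congr rfl fun _ _ => zpow_add₀ (Real.toNNReal_pos.2 (Real.exp_pos _)).ne' _ _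

theorem torusWeight_single (ω : Fin r → ℝ) (i : Fin r) :
    torusWeight ω (Pi.single i 1) = (Real.exp (-ω i)).toNNReal := by
  simp [torusWeight, Pi.single_apply]

theorem continuous_torusWeight_apply (m : Fin r → ℤ) :
    Continuous fun ω : Fin r → ℝ => torusWeight ω m := by
  show Continuous fun ω : Fin r → ℝ => ∏ i, (Real.exp (-ω i)).toNNReal ^ (m i)
  exact continuous_finsetProd _ fun i _ =>
    (continuous_real_toNNReal.comp (Real.continuous_exp.comp (continuous_apply i).neg)).zpow₀
      _ fun ω => Or.inl (Real.toNNReal_pos.2 (Real.exp_pos _)).ne'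

variable [IsUltrametricDist K]

noncomputable def gaussPoint (ω : Fin r → ℝ) : TorusBerk K r :=
  ⟨fun f => gaussNorm (torusWeight ω) f,
    fun f g => by simp only [gaussNorm_mul, NNReal.coe_mul],
    fun f g => by simpa only [← NNReal.coe_max, NNReal.coe_le_coe] using gaussNorm_add_le _ f g,
    fun a => by simp,
    fun f => (gaussNorm _ f).coe_nonneg⟩

theorem tropMap_gaussPoint (ω : Fin r → ℝ) : tropMap (gaussPoint (K := K) ω) = ω := by
  funext i
  simp [tropMap, gaussPoint, torusWeight_single, (Real.exp_pos _).le]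

theorem continuous_gaussPoint : Continuous (gaussPoint (K := K) (r := r)) :=
  (continuous_pi fun f => NNReal.continuous_coe.comp
    (continuous_gaussNorm continuous_torusWeight_apply f)).subtype_mk _

end TorusBerk

theorem gauss_section_skeleton_general {K : Type*} [NormedField K]
    [IsUltrametricDist K] (r : ℕ) :
    ∃ sec : (Fin r → ℝ) → TorusBerk K r,
      (∀ ω f, (sec ω).1 f = gaussFun ω f) ∧
      Continuous sec ∧
      (∀ ω, tropMap (sec ω) = ω) ∧
      Topology.IsEmbedding sec ∧
      IsClosed (Set.range sec) := by
  have hleft : Function.LeftInverse tropMap (TorusBerk.gaussPoint (K := K) (r := r)) :=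
    TorusBerk.tropMap_gaussPoint
  exact ⟨TorusBerk.gaussPoint, fun _ _ => rfl, TorusBerk.continuous_gaussPoint, hleft,
    .of_leftInverse hleft TorusBerk.continuous_tropMap TorusBerk.continuous_gaussPoint,
    hleft.isClosed_range TorusBerk.continuous_tropMap TorusBerk.continuous_gaussPoint⟩

/-- The map `ℝ^r → (𝔾_m^r)^an` sending `ω` to the weighted Gauss norm
`η_s` with `s = (e^{-ω_1},…,e^{-ω_r})` is a continuous section of the tropicalization
map, and a homeomorphism of `ℝ^r` onto its image (the skeleton `S((𝔾_m^r)^an)`),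
which is a closed subset of `(𝔾_m^r)^an`. -/
theorem gauss_section_skeleton {K : Type*} [NormedField K]
    [IsUltrametricDist K] [IsAlgClosed K] [CompleteSpace K]
    (hnontriv : ∃ a : K, a ≠ 0 ∧ ‖a‖ ≠ 1) (r : ℕ) :
    ∃ sec : (Fin r → ℝ) → TorusBerk K r,
      (∀ ω f, (sec ω).1 f = gaussFun ω f) ∧
      Continuous sec ∧
      (∀ ω, tropMap (sec ω) = ω) ∧
      Topology.IsEmbedding sec ∧
      IsClosed (Set.range sec) :=
  gauss_section_skeleton_general r
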